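/- For all a, b ∈ ℝ² one has the lower bound |a/⟨a⟩ − b/⟨b⟩| ≳ |a − b| / (max(⟨a⟩, ⟨b⟩) min(⟨a⟩, ⟨b⟩)²), with an absolute implicit constant, where ⟨a⟩ = (1+|a|²)^{1/2}. -/

import Mathlib

/-!
Write `A = ⟨a⟩`, `B = ⟨b⟩`, `u = |a|`, `v = |b|`. Since `a/A − b/B = (Ba − Ab)/(AB)` and
`AB = max(A,B) min(A,B)`, it suffices to show `|a − b| ≤ 2 min(A,B) |Ba − Ab|`. Both sides split
into a radial part and an angular part `uv − a·b ≥ 0`: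
`|sa − tb|² = (su − tv)² + 2st(uv − a·b)`.
The angular parts compare trivially since `A, B ≥ 1`. For the radial parts,
`(Bu − Av)(Bu + Av) = u² − v²` and `Bu + Av ≤ 2 min(A,B)(u + v)`.
-/

open MeasureTheory

local notation "E2" => EuclideanSpace ℝ (Fin 2)

/-- Japanese bracket `⟨x⟩ = (1+|x|²)^{1/2}`. -/
noncomputable def jb (x : E2) : ℝ := Real.sqrt (1 + ‖x‖ ^ 2)

lemma jb_sq (x : E2) : jb x ^ 2 = 1 + ‖x‖ ^ 2 :=
  Real.sq_sqrt (by positivity)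

lemma one_le_jb (x : E2) : 1 ≤ jb x :=
  Real.one_le_sqrt.mpr (by nlinarith [sq_nonneg ‖x‖])

section Bracket

variable {u v A B : ℝ}

lemma mul_add_mul_le_two_mul_mul_add (hu : 0 ≤ u) (hv : 0 ≤ v) (hA : 0 ≤ A) (hB : 0 ≤ B)
    (hA2 : A ^ 2 = 1 + u ^ 2) (hB2 : B ^ 2 = 1 + v ^ 2) :
    B * u + A * v ≤ 2 * A * (u + v) := by
  rcases le_total B A with hBA | hAB
  · nlinarith
  · have hBu : B * u ≤ A * v := by
      have : (B * u) ^ 2 ≤ (A * v) ^ 2 := by nlinarith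
      exact (pow_le_pow_iff_left₀ (by positivity) (by positivity) two_ne_zero).mp this
    nlinarith

lemma abs_sub_le_two_mul_min_mul_abs_mul_sub_mul (hu : 0 ≤ u) (hv : 0 ≤ v) (hA : 0 ≤ A)
    (hB : 0 ≤ B) (hA2 : A ^ 2 = 1 + u ^ 2) (hB2 : B ^ 2 = 1 + v ^ 2) :
    |u - v| ≤ 2 * min A B * |B * u - A * v| := by
  have hsum : B * u + A * v ≤ 2 * min A B * (u + v) := by
    rcases min_choice A B with h | h <;> rw [h]
    · exact mul_add_mul_le_two_mul_mul_add hu hv hA hB hA2 hB2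
    · linarith [mul_add_mul_le_two_mul_mul_add hv hu hB hA hB2 hA2]
  rcases (add_nonneg hu hv).eq_or_lt with h0 | hpos
  · obtain rfl : u = 0 := by linarith
    obtain rfl : v = 0 := by linarith
    simp
  refine le_of_mul_le_mul_right ?_ hpos
  calc |u - v| * (u + v) = |(u - v) * (u + v)| := by rw [abs_mul, abs_of_nonneg hpos.le]
    _ = |(B * u - A * v) * (B * u + A * v)| := by
        congr 1
        linear_combination v ^ 2 * hA2 - u ^ 2 * hB2
    _ = |B * u - A * v| * (B * u + A * v) := by
        rw [abs_mul, abs_of_nonneg (add_nonneg (mul_nonneg hB hu) (mul_nonneg hA hv))]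
    _ ≤ |B * u - A * v| * (2 * min A B * (u + v)) := by gcongr
    _ = 2 * min A B * |B * u - A * v| * (u + v) := by ring

end Bracket

section InnerProductSpace

variable {E : Type*} [NormedAddCommGroup E] [InnerProductSpace ℝ E]

lemma norm_smul_sub_smul_sq (s t : ℝ) (a b : E) :
    ‖s • a - t • b‖ ^ 2 =
      (s * ‖a‖ - t * ‖b‖) ^ 2 + 2 * (s * t) * (‖a‖ * ‖b‖ - inner ℝ a b) := by
  rw [norm_sub_sq_real, norm_smul, norm_smul, real_inner_smul_left, real_inner_smul_right,
    Real.norm_eq_abs, Real.norm_eq_abs, mul_pow, mul_pow, sq_abs, sq_abs]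
  ring

lemma norm_sub_le_two_mul_min_mul_norm_smul_sub_smul {a b : E} {A B : ℝ} (hA : 0 ≤ A)
    (hB : 0 ≤ B) (hA2 : A ^ 2 = 1 + ‖a‖ ^ 2) (hB2 : B ^ 2 = 1 + ‖b‖ ^ 2) :
    ‖a - b‖ ≤ 2 * min A B * ‖B • a - A • b‖ := by
  have hradial := abs_sub_le_two_mul_min_mul_abs_mul_sub_mul (norm_nonneg a) (norm_nonneg b)
    hA hB hA2 hB2
  have hradial_sq : (‖a‖ - ‖b‖) ^ 2 ≤ (2 * min A B) ^ 2 * (B * ‖a‖ - A * ‖b‖) ^ 2 := by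
    rw [← sq_abs, ← sq_abs (B * ‖a‖ - A * ‖b‖), ← mul_pow]
    gcongr
  have hangular : 0 ≤ ‖a‖ * ‖b‖ - inner ℝ a b := sub_nonneg.mpr (real_inner_le_norm a b)
  have hA1 : 1 ≤ A := by nlinarith [sq_nonneg ‖a‖]
  have hB1 : 1 ≤ B := by nlinarith [sq_nonneg ‖b‖]
  have hm : 1 ≤ min A B := le_min hA1 hB1
  have hscale : 1 ≤ (2 * min A B) ^ 2 * (B * A) :=
    one_le_mul_of_one_le_of_one_le (one_le_pow₀ (by linarith)) (one_le_mul_of_one_le_of_one_le hB1 hA1)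
  refine (pow_le_pow_iff_left₀ (norm_nonneg _) (by positivity) two_ne_zero).mp ?_
  have hdiff := norm_smul_sub_smul_sq 1 1 a b
  simp only [one_smul, one_mul, mul_one] at hdiff
  rw [hdiff, mul_pow, norm_smul_sub_smul_sq]
  nlinarith [mul_le_mul_of_nonneg_right hscale hangular]

end InnerProductSpace

/-- Nondegeneracy lower bound for the relativistic velocity map `a ↦ a/⟨a⟩`:
`|a/⟨a⟩ − b/⟨b⟩| ≳ |a − b| / (max(⟨a⟩,⟨b⟩) min(⟨a⟩,⟨b⟩)²)` with an absolute
constant. -/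
theorem stmt_19 :
    ∃ c > (0:ℝ), ∀ a b : E2,
      c * (‖a - b‖ / (max (jb a) (jb b) * min (jb a) (jb b) ^ 2)) ≤
        ‖(jb a)⁻¹ • a - (jb b)⁻¹ • b‖ := by
  refine ⟨1 / 2, by norm_num, fun a b => ?_⟩
  have hA : 0 < jb a := zero_lt_one.trans_le (one_le_jb a)
  have hB : 0 < jb b := zero_lt_one.trans_le (one_le_jb b)
  have hkey := norm_sub_le_two_mul_min_mul_norm_smul_sub_smul hA.le hB.le (jb_sq a) (jb_sq b)
  have hsmul : (jb a)⁻¹ • a - (jb b)⁻¹ • b = (jb a * jb b)⁻¹ • (jb b • a - jb a • b) := by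
    rw [smul_sub, smul_smul, smul_smul]
    congr 2 <;> field_simp
  have hm : 0 < min (jb a) (jb b) := lt_min hA hB
  have hM : 0 < max (jb a) (jb b) := lt_max_of_lt_left hA
  calc 1 / 2 * (‖a - b‖ / (max (jb a) (jb b) * min (jb a) (jb b) ^ 2))
      ≤ 1 / 2 * (2 * min (jb a) (jb b) * ‖jb b • a - jb a • b‖
          / (max (jb a) (jb b) * min (jb a) (jb b) ^ 2)) := by gcongr
    _ = (max (jb a) (jb b) * min (jb a) (jb b))⁻¹ * ‖jb b • a - jb a • b‖ := by
        field_simp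
    _ = ‖(jb a)⁻¹ • a - (jb b)⁻¹ • b‖ := by
        rw [max_mul_min, hsmul, norm_smul, norm_inv, Real.norm_of_nonneg (by positivity)]
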